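/- Let M > 0, Λ > 0 and s ∈ (0,1] satisfy 9 s³ Λ M² < 1. Then the cubic P(·,s) has exactly two positive roots r₀ < r∞; they satisfy P'(r₀,s) < 0 and P'(r∞,s) > 0; moreover P(r,s) < 0 for all r ∈ (r₀,r∞) and P(r,s) > 0 for all r ∈ [0,r₀). -/

import Mathlib

/-!
On `r ≥ 0` the cubic `P(·,s)` decreases down to its critical point `r_c = (sΛ)^{-1/2}`, where
`sΛ r_c² = 1` gives `P(r_c,s) = 2sM - 2r_c/3`, and increases afterwards. Since `P(0,s) = 2sM > 0`,
`P(2r_c,s) = 2sM + 2r_c/3 > 0`, and `P(r_c,s) < 0` is exactly `(3sM)² < r_c²`, i.e. `9s³ΛM² < 1`,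
there is one root on each side of `r_c`, and the signs of `P` and `P'` follow from monotonicity.
-/

noncomputable section

/-- The cubic polynomial `P(r,s) = sL/3*r^3 - r + 2sM` (case `Q = 0`). -/
def Pc (M Λ s r : ℝ) : ℝ := s * Λ / 3 * r ^ 3 - r + 2 * s * M

/-- Derivative of `Pc` with respect to `r`. -/
def Pc' (M Λ s r : ℝ) : ℝ := s * Λ * r ^ 2 - 1

open Set

theorem exists_two_roots_of_strictAntiOn_of_strictMonoOn {f : ℝ → ℝ} {a m b : ℝ}
    (ham : a ≤ m) (hmb : m ≤ b) (hf : ContinuousOn f (Icc a b))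
    (hanti : StrictAntiOn f (Icc a m)) (hmono : StrictMonoOn f (Ici m))
    (ha : 0 < f a) (hm : f m < 0) (hb : 0 < f b) :
    ∃ r₀ r₁, a < r₀ ∧ r₀ < m ∧ m < r₁ ∧ f r₀ = 0 ∧ f r₁ = 0 ∧
      (∀ r, a ≤ r → f r = 0 → r = r₀ ∨ r = r₁) ∧
      (∀ r, r₀ < r → r < r₁ → f r < 0) ∧
      (∀ r, a ≤ r → r < r₀ → 0 < f r) := by
  obtain ⟨r₀, hr₀mem, hr₀⟩ : ∃ r₀ ∈ Icc a m, f r₀ = 0 :=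
    intermediate_value_Icc' ham (hf.mono (Icc_subset_Icc_right hmb)) ⟨hm.le, ha.le⟩
  obtain ⟨r₁, ⟨hr₁mem, -⟩, hr₁⟩ : ∃ r₁ ∈ Icc m b, f r₁ = 0 :=
    intermediate_value_Icc hmb (hf.mono (Icc_subset_Icc_left ham)) ⟨hm.le, hb.le⟩
  have har₀ : a < r₀ := hr₀mem.1.lt_of_ne (by rintro rfl; linarith)
  have hr₀m : r₀ < m := hr₀mem.2.lt_of_ne (by rintro rfl; linarith)
  have hmr₁ : m < r₁ := hr₁mem.lt_of_ne (by rintro rfl; linarith)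
  refine ⟨r₀, r₁, har₀, hr₀m, hmr₁, hr₀, hr₁, ?roots, ?neg, ?pos⟩
  case roots =>
    intro r har hr
    rcases le_total r m with hrm | hmr
    · exact .inl ((hanti.eq_iff_eq ⟨har, hrm⟩ hr₀mem).1 (hr.trans hr₀.symm)).symm
    · exact .inr ((hmono.eq_iff_eq hmr hr₁mem).1 (hr.trans hr₁.symm))
  case neg =>
    intro r h₀ h₁
    rcases le_total r m with hrm | hmr
    · exact hr₀ ▸ hanti hr₀mem ⟨hr₀mem.1.trans h₀.le, hrm⟩ h₀
    · exact hr₁ ▸ hmono hmr hr₁mem h₁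
  case pos =>
    intro r har hr
    exact hr₀ ▸ hanti ⟨har, hr.le.trans hr₀m.le⟩ hr₀mem hr

def rCrit (Λ s : ℝ) : ℝ := (√(s * Λ))⁻¹

section

variable {M Λ s : ℝ}

theorem rCrit_pos (h : 0 < s * Λ) : 0 < rCrit Λ s := by
  unfold rCrit; positivity

theorem mul_rCrit_sq (h : 0 < s * Λ) : s * Λ * rCrit Λ s ^ 2 = 1 := by
  rw [rCrit, inv_pow, Real.sq_sqrt h.le, mul_inv_cancel₀ h.ne']

theorem Pc'_eq (h : 0 < s * Λ) (r : ℝ) : Pc' M Λ s r = s * Λ * (r ^ 2 - rCrit Λ s ^ 2) := by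
  rw [Pc', mul_sub, mul_rCrit_sq h]

theorem Pc'_neg (h : 0 < s * Λ) {r : ℝ} (hr0 : 0 ≤ r) (hr : r < rCrit Λ s) : Pc' M Λ s r < 0 := by
  rw [Pc'_eq h]
  exact mul_neg_of_pos_of_neg h (sub_neg.2 (pow_lt_pow_left₀ hr hr0 two_ne_zero))

theorem Pc'_pos (h : 0 < s * Λ) {r : ℝ} (hr : rCrit Λ s < r) : 0 < Pc' M Λ s r := by
  rw [Pc'_eq h]
  exact mul_pos h (sub_pos.2 (pow_lt_pow_left₀ hr (rCrit_pos h).le two_ne_zero))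

theorem hasDerivAt_Pc (r : ℝ) : HasDerivAt (Pc M Λ s) (Pc' M Λ s r) r :=
  ((((hasDerivAt_pow 3 r).const_mul (s * Λ / 3)).sub (hasDerivAt_id' r)).add_const
    (2 * s * M)).congr_deriv (by rw [Pc']; ring)

theorem continuous_Pc : Continuous (Pc M Λ s) :=
  continuous_iff_continuousAt.2 fun r ↦ (hasDerivAt_Pc r).continuousAt

theorem strictAntiOn_Pc (h : 0 < s * Λ) : StrictAntiOn (Pc M Λ s) (Icc 0 (rCrit Λ s)) := by
  refine strictAntiOn_of_deriv_neg (convex_Icc _ _) continuous_Pc.continuousOn fun r hr ↦ ?_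
  rw [interior_Icc] at hr
  exact (hasDerivAt_Pc r).deriv ▸ Pc'_neg h hr.1.le hr.2

theorem strictMonoOn_Pc (h : 0 < s * Λ) : StrictMonoOn (Pc M Λ s) (Ici (rCrit Λ s)) := by
  refine strictMonoOn_of_deriv_pos (convex_Ici _) continuous_Pc.continuousOn fun r hr ↦ ?_
  rw [interior_Ici] at hr
  exact (hasDerivAt_Pc r).deriv ▸ Pc'_pos h hr

theorem Pc_rCrit (h : 0 < s * Λ) : Pc M Λ s (rCrit Λ s) = 2 * s * M - 2 / 3 * rCrit Λ s := by
  rw [Pc]; linear_combination rCrit Λ s / 3 * mul_rCrit_sq h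

theorem Pc_two_mul_rCrit (h : 0 < s * Λ) :
    Pc M Λ s (2 * rCrit Λ s) = 2 * s * M + 2 / 3 * rCrit Λ s := by
  rw [Pc]; linear_combination 8 * rCrit Λ s / 3 * mul_rCrit_sq h

theorem Pc_rCrit_neg (h : 0 < s * Λ) (hdisc : 9 * s ^ 3 * Λ * M ^ 2 < 1) :
    Pc M Λ s (rCrit Λ s) < 0 := by
  have hsq : (3 * s * M) ^ 2 < rCrit Λ s ^ 2 := by
    refine lt_of_mul_lt_mul_left ?_ h.le
    rw [mul_rCrit_sq h]
    linear_combination hdisc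
  have := (le_abs_self _).trans_lt (abs_lt_of_sq_lt_sq hsq (rCrit_pos h).le)
  rw [Pc_rCrit h]
  linarith

end

theorem root_structure_case_C2_general (M Λ s : ℝ)
    (hM : 0 < M) (hΛ : 0 < Λ) (hs0 : 0 < s)
    (h : 9 * s ^ 3 * Λ * M ^ 2 < 1) :
    ∃ r₀ rinf : ℝ, 0 < r₀ ∧ r₀ < rinf ∧
      Pc M Λ s r₀ = 0 ∧ Pc M Λ s rinf = 0 ∧
      (∀ r : ℝ, 0 < r → Pc M Λ s r = 0 → r = r₀ ∨ r = rinf) ∧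
      Pc' M Λ s r₀ < 0 ∧ 0 < Pc' M Λ s rinf ∧
      (∀ r : ℝ, r₀ < r → r < rinf → Pc M Λ s r < 0) ∧
      (∀ r : ℝ, 0 ≤ r → r < r₀ → 0 < Pc M Λ s r) := by
  have hsΛ : 0 < s * Λ := mul_pos hs0 hΛ
  have hrc := rCrit_pos hsΛ
  have hP0 : 0 < Pc M Λ s 0 := by rw [Pc]; norm_num; positivity
  have hP2c : 0 < Pc M Λ s (2 * rCrit Λ s) := by rw [Pc_two_mul_rCrit hsΛ]; positivity
  obtain ⟨r₀, rinf, h0r₀, hr₀c, hcrinf, hr₀, hrinf, roots, neg, pos⟩ :=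
    exists_two_roots_of_strictAntiOn_of_strictMonoOn hrc.le (by linarith)
      continuous_Pc.continuousOn (strictAntiOn_Pc hsΛ) (strictMonoOn_Pc hsΛ)
      hP0 (Pc_rCrit_neg hsΛ h) hP2c
  exact ⟨r₀, rinf, h0r₀, hr₀c.trans hcrinf, hr₀, hrinf, fun r hr ↦ roots r hr.le,
    Pc'_neg hsΛ h0r₀.le hr₀c, Pc'_pos hsΛ hcrinf, neg, pos⟩

/-- Case C₂ (Q = 0, Λ > 0, 9s³ΛM² < 1): exactly two positive roots with the stated
derivative and sign structure. -/
theorem root_structure_case_C2 (M Λ s : ℝ)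
    (hM : 0 < M) (hΛ : 0 < Λ) (hs0 : 0 < s) (hs1 : s ≤ 1)
    (h : 9 * s ^ 3 * Λ * M ^ 2 < 1) :
    ∃ r₀ rinf : ℝ, 0 < r₀ ∧ r₀ < rinf ∧
      Pc M Λ s r₀ = 0 ∧ Pc M Λ s rinf = 0 ∧
      (∀ r : ℝ, 0 < r → Pc M Λ s r = 0 → r = r₀ ∨ r = rinf) ∧
      Pc' M Λ s r₀ < 0 ∧ 0 < Pc' M Λ s rinf ∧
      (∀ r : ℝ, r₀ < r → r < rinf → Pc M Λ s r < 0) ∧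
      (∀ r : ℝ, 0 ≤ r → r < r₀ → 0 < Pc M Λ s r) :=
  root_structure_case_C2_general M Λ s hM hΛ hs0 h
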